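/- Let (L, G) be an irreducible built lattice (⊤ ∈ G). A nested set S ∈ N(L, G) is maximal if and only if for every g ∈ S ∪ {⊤}, the local interval [⋁ S_{<g}, g] has rank 1, i.e., g covers ⋁ S_{<g} in L. -/

import Mathlib

open scoped Classical

variable {L : Type*} [Lattice L] [BoundedOrder L] [Finite L]

/-- The join of a (finite) subset of `L`. -/
noncomputable def setJoin (S : Set L) : L := S.toFinite.toFinset.sup id

/-- The join of a subset of `L`, relative to a base point `a`. -/
noncomputable def joinFrom (a : L) (S : Set L) : L := a ⊔ setJoin S

/-- The `G`-factors of `F`: the maximal elements of `{g ∈ G | g ≤ F}`. -/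
def factors (G : Set L) (F : L) : Set L :=
  {g ∈ G | g ≤ F ∧ ∀ h ∈ G, h ≤ F → g ≤ h → g = h}

/-- `G` is a building set of the interval `[a, b]` of `L`: the join map
from the product of the intervals `[a, g]` over the `G`-factors `g` of `F`
to `[a, F]` is an order isomorphism, for every `F ∈ [a, b]`. -/
def IsBuildingIcc (a b : L) (G : Set L) : Prop :=
  G ⊆ Set.Icc a b ∧ a ∉ G ∧ ∀ F ∈ Set.Icc a b,
    ∃ e : (∀ g : factors G F, Set.Icc a (g : L)) ≃o Set.Icc a F,
      ∀ x, ((e x : L)) = joinFrom a (Set.range fun g => ((x g : L)))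

/-- `G` is a building set of the lattice `L`. -/
def IsBuilding (G : Set L) : Prop := IsBuildingIcc ⊥ ⊤ G

/-- `S` is a nested set of the built lattice `(L, G)`. -/
def IsNested (G S : Set L) : Prop :=
  S ⊆ G ∧ ∀ A ⊆ S, IsAntichain (· ≤ ·) A → 2 ≤ A.ncard → setJoin A ∉ G

/-- The building ideal generated by `g`. -/
def buildingIdeal (G : Set L) (g : L) : Set L := {F | g ∈ factors G F}

-- helper lemmas

lemma le_setJoin {S : Set L} {a : L} (h : a ∈ S) : a ≤ setJoin S :=
  Finset.le_sup (f := id) (S.toFinite.mem_toFinset.mpr h)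

lemma setJoin_le {S : Set L} {b : L} (h : ∀ a ∈ S, a ≤ b) : setJoin S ≤ b :=
  Finset.sup_le fun a ha => h a (S.toFinite.mem_toFinset.mp ha)

lemma setJoin_empty : setJoin (∅ : Set L) = ⊥ :=
  le_antisymm (setJoin_le (by simp)) bot_le

lemma setJoin_singleton (a : L) : setJoin ({a} : Set L) = a :=
  le_antisymm (setJoin_le (by simp)) (le_setJoin rfl)

lemma setJoin_union (s t : Set L) : setJoin (s ∪ t) = setJoin s ⊔ setJoin t := by
  apply le_antisymm
  · exact setJoin_le fun a ha => ha.elim (fun h => le_sup_of_le_left (le_setJoin h))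
      (fun h => le_sup_of_le_right (le_setJoin h))
  · exact sup_le (setJoin_le fun a ha => le_setJoin (Set.mem_union_left _ ha))
      (setJoin_le fun a ha => le_setJoin (Set.mem_union_right _ ha))

lemma setJoin_insert (a : L) (s : Set L) : setJoin (insert a s) = a ⊔ setJoin s := by
  rw [Set.insert_eq, setJoin_union, setJoin_singleton]

lemma factors_mem_G {G : Set L} {F f : L} (h : f ∈ factors G F) : f ∈ G := h.1

lemma factors_le {G : Set L} {F f : L} (h : f ∈ factors G F) : f ≤ F := h.2.1

lemma exists_factor_ge {G : Set L} {F g : L} (hg : g ∈ G) (hle : g ≤ F) :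
    ∃ f ∈ factors G F, g ≤ f := by
  obtain ⟨f, hf, hmax⟩ := Set.Finite.exists_maximalFor id {h ∈ G | h ≤ F ∧ g ≤ h}
    (Set.toFinite _) ⟨g, hg, hle, le_rfl⟩
  exact ⟨f, ⟨hf.1, hf.2.1, fun h hhG hhF hfh =>
    le_antisymm hfh (hmax ⟨hhG, hhF, hf.2.2.trans hfh⟩ hfh)⟩, hf.2.2⟩

lemma setJoin_factors {G : Set L} (hG : IsBuilding G) (F : L) :
    setJoin (factors G F) = F := by
  obtain ⟨e, he⟩ := hG.2.2 F ⟨bot_le, le_top⟩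
  apply le_antisymm (setJoin_le fun a ha => factors_le ha)
  obtain ⟨x, hx⟩ := e.surjective ⟨F, bot_le, le_rfl⟩
  have h1 : F = joinFrom ⊥ (Set.range fun g => ((x g : L))) := by
    rw [← he x, hx]
  refine h1.le.trans ?_
  refine sup_le bot_le (setJoin_le ?_)
  rintro a ⟨g, rfl⟩
  exact le_trans (x g).2.2 (le_setJoin g.2)

/-- key injectivity consequence: if a tuple of elements below the factors joins to `F`,
then each component is the corresponding factor. -/
lemma factor_tuple_eq {G : Set L} (hG : IsBuilding G) (F : L)
    (v : factors G F → L) (hv : ∀ f, v f ≤ (f : L))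
    (hjoin : setJoin (Set.range v) = F) : ∀ f, v f = (f : L) := by
  obtain ⟨e, he⟩ := hG.2.2 F ⟨bot_le, le_top⟩
  set x : ∀ g : factors G F, Set.Icc (⊥ : L) (g : L) := fun g => ⟨v g, bot_le, hv g⟩
  set t : ∀ g : factors G F, Set.Icc (⊥ : L) (g : L) := fun g => ⟨g, bot_le, le_rfl⟩
  have hx : (e x : L) = F := by
    rw [he x]
    show ⊥ ⊔ setJoin (Set.range fun g => ((x g : L))) = F
    rw [bot_sup_eq]
    exact hjoin
  have ht : (e t : L) = F := by
    rw [he t]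
    show ⊥ ⊔ setJoin _ = F
    rw [bot_sup_eq, Subtype.range_coe, setJoin_factors hG]
  have : e x = e t := Subtype.ext (hx.trans ht.symm)
  have hxt : x = t := e.injective this
  intro f
  have := congrFun hxt f
  exact Subtype.ext_iff.mp this

lemma bot_not_mem {G : Set L} (hG : IsBuilding G) : (⊥ : L) ∉ G := hG.2.1

/-- factors of the join of an antichain in a nested set are exactly the antichain. -/
lemma factors_nested_join {G S : Set L} (hG : IsBuilding G) (hS : IsNested G S)
    {A : Set L} (hAS : A ⊆ S) (hA : IsAntichain (· ≤ ·) A) (h2 : 2 ≤ A.ncard) :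
    factors G (setJoin A) = A := by
  set F := setJoin A with hF
  set v : factors G F → L := fun f => setJoin {a ∈ A | a ≤ (f : L)} with hvdef
  have hv : ∀ f, v f ≤ (f : L) := fun f => setJoin_le fun a ha => ha.2
  have hjoin : setJoin (Set.range v) = F := by
    apply le_antisymm
    · exact setJoin_le (by rintro _ ⟨f, rfl⟩; exact (hv f).trans (factors_le f.2))
    · refine setJoin_le fun a ha => ?_
      obtain ⟨f, hf, haf⟩ := exists_factor_ge (hS.1 (hAS ha)) (le_setJoin ha)
      have h1 : a ≤ v ⟨f, hf⟩ := le_setJoin (show a ∈ {a ∈ A | a ≤ f} from ⟨ha, haf⟩)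
      exact h1.trans (le_setJoin ⟨⟨f, hf⟩, rfl⟩)
  have hkey := factor_tuple_eq hG F v hv hjoin
  have hsub : factors G F ⊆ A := by
    intro f hf
    have hvf : setJoin {a ∈ A | a ≤ f} = f := hkey ⟨f, hf⟩
    set Af := {a ∈ A | a ≤ f} with hAf
    have hAfS : Af ⊆ S := fun a ha => hAS ha.1
    rcases Nat.lt_or_ge Af.ncard 2 with hlt | hge
    · interval_cases h : Af.ncard
      · exfalso
        have he0 : Af = ∅ := (Set.ncard_eq_zero (Set.toFinite _)).mp h
        rw [he0, setJoin_empty] at hvf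
        exact bot_not_mem hG (by rw [hvf]; exact hf.1)
      · obtain ⟨a, ha⟩ := Set.ncard_eq_one.mp h
        rw [ha, setJoin_singleton] at hvf
        have haAf : a ∈ Af := ha ▸ rfl
        rw [← hvf]
        exact haAf.1
    · exact absurd (hvf ▸ hf.1) (hS.2 Af hAfS (hA.subset fun a ha => ha.1) hge)
  refine Set.Subset.antisymm hsub fun x hx => ?_
  obtain ⟨f, hf, hxf⟩ := exists_factor_ge (hS.1 (hAS hx)) (le_setJoin hx)
  have hfA : f ∈ A := hsub hf
  rcases eq_or_ne x f with rfl | hne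
  · exact hf
  · exact absurd hxf (hA hx hfA hne)
-- maximal elements helpers
def maxOf (S : Set L) : Set L := {a ∈ S | ∀ b ∈ S, a ≤ b → a = b}

lemma maxOf_subset (S : Set L) : maxOf S ⊆ S := fun _ h => h.1

lemma maxOf_antichain (S : Set L) : IsAntichain (· ≤ ·) (maxOf S) :=
  fun _ ha _ hb hne hle => hne (ha.2 _ hb.1 hle)

lemma exists_maxOf_ge {S : Set L} {a : L} (h : a ∈ S) : ∃ b ∈ maxOf S, a ≤ b := by
  obtain ⟨b, hb, hmax⟩ := Set.Finite.exists_maximalFor id {b ∈ S | a ≤ b}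
    (Set.toFinite _) ⟨a, h, le_rfl⟩
  exact ⟨b, ⟨hb.1, fun c hc hbc => le_antisymm hbc (hmax ⟨hc, hb.2.trans hbc⟩ hbc)⟩, hb.2⟩

lemma setJoin_maxOf (S : Set L) : setJoin (maxOf S) = setJoin S := by
  apply le_antisymm (setJoin_le fun a ha => le_setJoin ha.1)
  refine setJoin_le fun a ha => ?_
  obtain ⟨b, hb, hab⟩ := exists_maxOf_ge ha
  exact hab.trans (le_setJoin hb)

lemma exists_covby_of_lt_not_covby {a b : L} (hab : a < b) (h : ¬ a ⋖ b) :
    ∃ y, a ⋖ y ∧ y < b := by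
  have : ∃ c, a < c ∧ c < b := by
    by_contra hc
    push_neg at hc
    exact h ⟨hab, fun c h1 h2 => absurd h2 (hc c h1)⟩
  obtain ⟨c, hc⟩ := this
  obtain ⟨y, hy, hmin⟩ := Set.Finite.exists_minimalFor id {z | a < z ∧ z < b}
    (Set.toFinite _) ⟨c, hc⟩
  refine ⟨y, ⟨hy.1, fun d hd hdy => ?_⟩, hy.2⟩
  exact absurd (hmin ⟨hd, hdy.trans hy.2⟩ hdy.le) (not_le_of_gt hdy)

/-- the join of elements of a nested set strictly below an element of `G` is strictly below. -/
lemma nested_join_lt {G S : Set L} (hG : IsBuilding G) (hS : IsNested G S) {g : L}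
    (hgG : g ∈ G) (A : Set L) (hAS : A ⊆ S) (hA : IsAntichain (· ≤ ·) A)
    (hlt : ∀ a ∈ A, a < g) : setJoin A < g := by
  rcases lt_or_eq_of_le (setJoin_le fun a ha => (hlt a ha).le) with h | h
  · exact h
  exfalso
  rcases Nat.lt_or_ge A.ncard 2 with h2 | h2
  · interval_cases hn : A.ncard
    · have hA0 : A = ∅ := (Set.ncard_eq_zero (Set.toFinite _)).mp hn
      rw [hA0, setJoin_empty] at h
      exact bot_not_mem hG (h ▸ hgG)
    · obtain ⟨a, ha⟩ := Set.ncard_eq_one.mp hn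
      rw [ha, setJoin_singleton] at h
      exact absurd h (hlt a (ha ▸ rfl)).ne
  · exact hS.2 A hAS hA h2 (by rw [h]; exact hgG)


/-- In an irreducible graded built lattice `(L, G)`, a nested set `S` is maximal if and
only if for every `g ∈ S ∪ {⊤}`, the local interval `[⋁ S_{<g}, g]` has rank `1`, i.e.
`g` covers `⋁ S_{<g}` in `L`. -/
theorem maximal_nested_iff_local_rank_one [GradeBoundedOrder ℕ L]
    (G : Set L) (hG : IsBuilding G) (htop : (⊤ : L) ∈ G)
    (S : Set L) (hS : IsNested G S) (hStop : (⊤ : L) ∉ S) :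
    (∀ S' : Set L, IsNested G S' → (⊤ : L) ∉ S' → S ⊆ S' → S' = S) ↔
      ∀ g ∈ insert (⊤ : L) S, setJoin {h ∈ S | h < g} ⋖ g := by
  constructor
  · -- maximal → local rank one
    intro hmax g hg
    have hgG : g ∈ G := by rcases hg with rfl | hgS; exacts [htop, hS.1 hgS]
    set Sg : Set L := {h ∈ S | h < g} with hSg
    set J : L := setJoin Sg with hJ
    set A : Set L := maxOf Sg with hA
    have hASg : A ⊆ Sg := maxOf_subset _
    have hAS : A ⊆ S := fun a ha => (hASg ha).1
    have hAjoin : setJoin A = J := setJoin_maxOf _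
    have hJlt : J < g := by
      rw [← hAjoin]
      exact nested_join_lt hG hS hgG A hAS (maxOf_antichain _) fun a ha => (hASg ha).2
    by_contra hnc
    obtain ⟨y, hcov, hyg⟩ := exists_covby_of_lt_not_covby hJlt hnc
    -- pick a factor of y not below J
    have hfex : ¬ ∀ f ∈ factors G y, f ≤ J := by
      intro hall
      have : y ≤ J := by rw [← setJoin_factors hG y]; exact setJoin_le hall
      exact absurd (hcov.1.trans_le this) (lt_irrefl _)
    push_neg at hfex
    obtain ⟨h, hhf, hhJ⟩ := hfex
    have hhG : h ∈ G := hhf.1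
    have hhy : h ≤ y := factors_le hhf
    have hhg : h < g := hhy.trans_lt hyg
    have hhS : h ∉ S := fun hmem => hhJ (le_setJoin ⟨hmem, hhg⟩)
    have hhtop : h ≠ ⊤ := (hhg.trans_le le_top).ne
    -- S ∪ {h} is nested
    have hnested : IsNested G (insert h S) := by
      refine ⟨Set.insert_subset hhG hS.1, ?_⟩
      intro A' hA'sub hA' h2
      by_cases hhA' : h ∈ A'
      · intro hwG
        set B : Set L := A' \ {h} with hB
        have hAB : A' = insert h B := by
          rw [hB, Set.insert_diff_singleton, Set.insert_eq_self.mpr hhA']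
        have hhB : h ∉ B := fun hb => hb.2 rfl
        have hBS : B ⊆ S := fun b hb =>
          (hA'sub hb.1).elim (fun e => absurd e hb.2) id
        have hBne : B.Nonempty := by
          apply Set.nonempty_of_ncard_ne_zero
          have := Set.ncard_insert_of_notMem hhB (Set.toFinite _)
          rw [← hAB] at this
          omega
        have hpair : ∀ b ∈ B, ¬ b ≤ h ∧ ¬ h ≤ b := fun b hb =>
          ⟨hA' hb.1 hhA' hb.2 , hA' hhA' hb.1 (Ne.symm hb.2)⟩
        have hw : setJoin A' = h ⊔ setJoin B := by rw [hAB, setJoin_insert]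
        have hbg : ∀ b ∈ B, ¬ g ≤ b := fun b hb hgb =>
          (hpair b hb).2 (hhg.le.trans hgb)
        set B2 : Set L := {b ∈ B | ¬ b < g} with hB2def
        by_cases hB2 : B2 = ∅
        · -- all elements of B are < g, so below J
          have hBJ : setJoin B ≤ J := setJoin_le fun b hb => by
            have hblt : b < g := by
              by_contra hbl
              exact (Set.eq_empty_iff_forall_notMem.mp hB2 b) ⟨hb, hbl⟩
            exact le_setJoin ⟨hBS hb, hblt⟩
          have hwy : setJoin A' ≤ y := by
            rw [hw]; exact sup_le hhy (hBJ.trans hcov.1.le)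
          obtain ⟨f, hf, hwf⟩ := exists_factor_ge hwG hwy
          have hhf2 : h = f := hhf.2.2 f hf.1 hf.2.1 ((le_setJoin hhA').trans hwf)
          obtain ⟨b, hb⟩ := hBne
          exact (hpair b hb).1 (((le_setJoin hb.1).trans hwf).trans hhf2.ge)
        · -- B2 nonempty: use nestedness of S with {g} ∪ B2
          obtain ⟨b0, hb0⟩ := Set.nonempty_iff_ne_empty.mpr hB2
          have hbnle : ∀ b ∈ B2, ¬ b ≤ g := fun b hb hble => by
            rcases lt_or_eq_of_le hble with hl | he
            · exact hb.2 hl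
            · exact hbg b hb.1 he.ge
          have hgS : g ∈ S := by
            rcases hg with rfl | hgS
            · exact absurd le_top (hbnle b0 hb0)
            · exact hgS
          set C : Set L := insert g B2 with hC
          have hgB2 : g ∉ B2 := fun hm => hbnle g hm le_rfl
          have hCS : C ⊆ S := Set.insert_subset hgS fun b hb => hBS hb.1
          have hCac : IsAntichain (· ≤ ·) C := by
            intro u hu v hv huv
            rcases hu with rfl | hu <;> rcases hv with rfl | hv
            · exact absurd rfl huv
            · exact hbg v hv.1
            · exact hbnle u hu
            · exact hA' hu.1.1 hv.1.1 huv
          have hC2 : 2 ≤ C.ncard := by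
            have h1 := Set.ncard_insert_of_notMem hgB2 (Set.toFinite _)
            have h2 := Set.ncard_pos (Set.toFinite B2) |>.mpr ⟨b0, hb0⟩
            rw [← hC] at h1
            omega
          have hvG : setJoin C ∉ G := hS.2 C hCS hCac hC2
          have hfac : factors G (setJoin C) = C := factors_nested_join hG hS hCS hCac hC2
          have hgC : g ≤ setJoin C := le_setJoin (Set.mem_insert _ _)
          have hwv : setJoin A' ≤ setJoin C := by
            rw [hw]
            refine sup_le (hhg.le.trans hgC) (setJoin_le fun b hb => ?_)
            by_cases hbB2 : b ∈ B2
            · exact le_setJoin (Set.mem_insert_of_mem _ hbB2)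
            · have hblt : b < g := by
                by_contra hbl
                exact hbB2 ⟨hb, hbl⟩
              exact hblt.le.trans hgC
          obtain ⟨f, hf, hwf⟩ := exists_factor_ge hwG hwv
          have hfC : f ∈ C := hfac ▸ hf
          rcases hfC with rfl | hfB2
          · exact hbnle b0 hb0 ((le_setJoin hb0.1.1).trans hwf)
          · exact (hpair f hfB2.1).2 ((le_setJoin hhA').trans hwf)
      · have hA'S : A' ⊆ S := fun a ha =>
          (hA'sub ha).elim (fun e => absurd (e ▸ ha) hhA') id
        exact hS.2 A' hA'S hA' h2
    have htopS : (⊤ : L) ∉ insert h S := by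
      rintro (e | e)
      · exact hhtop e.symm
      · exact hStop e
    have := hmax (insert h S) hnested htopS (Set.subset_insert _ _)
    exact hhS (this ▸ Set.mem_insert h S)
  · -- local rank one → maximal
    intro hcov S' hS' hS'top hSS'
    by_contra hne
    obtain ⟨h, hhS', hhS⟩ := Set.not_subset.mp fun hsub => hne (Set.Subset.antisymm hsub hSS')
    have hhG : h ∈ G := hS'.1 hhS'
    obtain ⟨g, ⟨hgmem, hhg⟩, hmin⟩ := Set.Finite.exists_minimalFor id
      {x ∈ insert (⊤ : L) S | h ≤ x} (Set.toFinite _) ⟨⊤, Set.mem_insert _ _, le_top⟩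
    have hgG : g ∈ G := by rcases hgmem with rfl | hgS; exacts [htop, hS.1 hgS]
    have hne_hg : h ≠ g := by
      rcases hgmem with rfl | hgS
      · exact fun e => hS'top (e ▸ hhS')
      · exact fun e => hhS (e ▸ hgS)
    have hhlt : h < g := lt_of_le_of_ne hhg hne_hg
    have hnotle : ∀ f ∈ S, f < g → ¬ h ≤ f := fun f hf hfg hhf =>
      absurd (hmin ⟨Set.mem_insert_of_mem _ hf, hhf⟩ hfg.le) (not_le_of_gt hfg)
    set Sg : Set L := {f ∈ S | f < g} with hSgdef
    set J : L := setJoin Sg with hJ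
    have hcg : J ⋖ g := hcov g hgmem
    set A : Set L := maxOf Sg with hA
    have hASg : A ⊆ Sg := maxOf_subset _
    have hAjoin : setJoin A = J := setJoin_maxOf _
    by_cases hhJ : h ≤ J
    · -- h below the join of smaller elements: below a factor, contradiction
      rcases Nat.lt_or_ge A.ncard 2 with h2 | h2
      · interval_cases hn : A.ncard
        · have hA0 : A = ∅ := (Set.ncard_eq_zero (Set.toFinite _)).mp hn
          rw [← hAjoin, hA0, setJoin_empty, le_bot_iff] at hhJ
          exact bot_not_mem hG (hhJ ▸ hhG)
        · obtain ⟨a, ha⟩ := Set.ncard_eq_one.mp hn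
          rw [← hAjoin, ha, setJoin_singleton] at hhJ
          have haSg : a ∈ Sg := hASg (ha ▸ rfl)
          exact hnotle a haSg.1 haSg.2 hhJ
      · have hfac : factors G (setJoin A) = A :=
          factors_nested_join hG hS (fun a ha => (hASg ha).1)
            ((maxOf_antichain _)) h2
        obtain ⟨f, hf, hhf⟩ := exists_factor_ge hhG (hAjoin ▸ hhJ)
        have hfA : f ∈ A := hfac ▸ hf
        have hfSg : f ∈ Sg := hASg hfA
        exact hnotle f hfSg.1 hfSg.2 hhf
    · -- h ⊔ J = g, build an antichain in S' joining to g ∈ G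
      have hJlt : J < h ⊔ J := right_lt_sup.mpr hhJ
      have hsg : h ⊔ J ≤ g := sup_le hhlt.le (setJoin_le fun f hf => hf.2.le)
      have hg_eq : h ⊔ J = g := (lt_or_eq_of_le hsg).resolve_left (hcg.2 hJlt)
      set B : Set L := {a ∈ A | ¬ a ≤ h} with hB
      have hBne : B.Nonempty := by
        rw [Set.nonempty_iff_ne_empty]
        intro hBe
        have hAh : ∀ a ∈ A, a ≤ h := fun a ha => by
          by_contra hah
          exact (Set.eq_empty_iff_forall_notMem.mp hBe a) ⟨ha, hah⟩
        have : J ≤ h := hAjoin ▸ setJoin_le hAh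
        have : g = h := by rw [← hg_eq, sup_eq_left.mpr this]
        exact hne_hg this.symm
      have hhB : h ∉ B := fun hb => hhS (hASg hb.1).1
      set C : Set L := insert h B with hC
      have hCS' : C ⊆ S' := Set.insert_subset hhS' fun b hb => hSS' (hASg hb.1).1
      have hCac : IsAntichain (· ≤ ·) C := by
        intro u hu v hv huv
        rcases hu with rfl | hu <;> rcases hv with rfl | hv
        · exact absurd rfl huv
        · exact fun hle => hnotle v (hASg hv.1).1 (hASg hv.1).2 hle
        · exact hu.2
        · exact maxOf_antichain _ hu.1 hv.1 huv
      have hC2 : 2 ≤ C.ncard := by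
        have h1 := Set.ncard_insert_of_notMem hhB (Set.toFinite _)
        have h2 := Set.ncard_pos (Set.toFinite B) |>.mpr hBne
        rw [← hC] at h1
        omega
      have hjoinC : setJoin C = g := by
        rw [hC, setJoin_insert, ← hg_eq]
        apply le_antisymm
        · exact sup_le le_sup_left (le_sup_of_le_right
            (hAjoin ▸ setJoin_le fun b hb => le_setJoin hb.1))
        · refine sup_le le_sup_left ?_
          rw [← hAjoin]
          refine setJoin_le fun a ha => ?_
          by_cases hah : a ≤ h
          · exact le_sup_of_le_left hah
          · exact le_sup_of_le_right (le_setJoin ⟨ha, hah⟩)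
      exact hS'.2 C hCS' hCac hC2 (hjoinC ▸ hgG)
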